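/- Let (X, μ) be a finite measure space and Ω : X → ℝ a measurable function with ∫_X |Ω| log(2+|Ω|) dμ < ∞. Define E₁ = { x : |Ω(x)| ≤ 2 }, E_m = { x : 2^{m−1} < |Ω(x)| ≤ 2^m } for integers m ≥ 2, and e_m = μ(E_m). Then there is a constant C > 0, depending only on μ(X), such that ∑_{m=1}^∞ m · 2^m · e_m^{m/(m+1)} ≤ C ( ∫_X |Ω| log(2+|Ω|) dμ + 1 ). -/

import Mathlib

/-!
On `E_m` with `m ≥ 2` one has `|Ω| > 2^(m-1)` and `log (2 + |Ω|) ≥ (m-1) log 2`, so the weight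
`m 2^m` is at most `(4 / log 2) |Ω| log (2 + |Ω|)` there; as the `E_m` are disjoint, this gives
`∑ m 2^m e_m ≲ μ(X) + ∫ |Ω| log (2 + |Ω|)`. Young's inequality at the scale `t = 4^(-(m+1))`
turns `e_m^(m/(m+1))` into `4^(-m) + 4 e_m`, and `∑ m 2^m 4^(-m)` converges.
-/

open MeasureTheory ENNReal Set

noncomputable section

/-- The level sets of `Ω`: `E₁ = {|Ω| ≤ 2}` and `E_m = {2^{m-1} < |Ω| ≤ 2^m}`
for `m ≥ 2`. -/
def Eset {X : Type*} (Ω : X → ℝ) (m : ℕ) : Set X :=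
  if m ≤ 1 then {x | |Ω x| ≤ 2} else {x | 2 ^ (m - 1) < |Ω x| ∧ |Ω x| ≤ 2 ^ m}

open Function

theorem ENNReal.rpow_le_one_add (x : ℝ≥0∞) {p : ℝ} (hp0 : 0 ≤ p) (hp1 : p ≤ 1) :
    x ^ p ≤ 1 + x := by
  rcases le_total x 1 with hx | hx
  · exact (rpow_le_one hx hp0).trans le_self_add
  · calc x ^ p ≤ x ^ (1 : ℝ) := rpow_le_rpow_of_exponent_le hx hp1
      _ = x := rpow_one x
      _ ≤ 1 + x := le_add_self

theorem ENNReal.rpow_le_rpow_add_rpow_sub_one_mul (a : ℝ≥0∞) {t : ℝ≥0∞} (ht0 : t ≠ 0)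
    (htop : t ≠ ⊤) {p : ℝ} (hp0 : 0 ≤ p) (hp1 : p ≤ 1) :
    a ^ p ≤ t ^ p + t ^ (p - 1) * a := by
  have hsplit : a = t * (t⁻¹ * a) := by
    rw [← mul_assoc, ENNReal.mul_inv_cancel ht0 htop, one_mul]
  calc a ^ p = t ^ p * (t⁻¹ * a) ^ p := by
        conv_lhs => rw [hsplit]
        exact mul_rpow_of_nonneg _ _ hp0
    _ ≤ t ^ p * (1 + t⁻¹ * a) := by gcongr; exact rpow_le_one_add _ hp0 hp1
    _ = t ^ p + t ^ (p - 1) * a := by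
        rw [rpow_sub _ _ ht0 htop, rpow_one, div_eq_mul_inv, mul_add, mul_one, mul_assoc]

theorem ENNReal.rpow_le_inv_four_pow_add_four_mul (m : ℕ) (a : ℝ≥0∞) :
    a ^ (((m : ℝ) + 1) / ((m : ℝ) + 2)) ≤ 4⁻¹ ^ (m + 1) + 4 * a := by
  have hm : (m : ℝ) + 2 ≠ 0 := by positivity
  -- at the scale `t = 4⁻¹ ^ (m + 2)` one has `t ^ p = 4⁻¹ ^ (m + 1)` and `t ^ (p - 1) = 4`
  have key := rpow_le_rpow_add_rpow_sub_one_mul a (t := 4⁻¹ ^ (m + 2)) (by simp) (by simp)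
    (p := ((m : ℝ) + 1) / ((m : ℝ) + 2)) (by positivity)
    (by rw [div_le_one (by positivity)]; linarith)
  have ht : ∀ q : ℝ, ((4 : ℝ≥0∞)⁻¹ ^ (m + 2)) ^ q = 4⁻¹ ^ (((m : ℝ) + 2) * q) := fun q => by
    rw [← rpow_natCast, ← rpow_mul]; push_cast; rfl
  rw [ht, ht, mul_div_cancel₀ _ hm, show ((m : ℝ) + 2) * ((m + 1) / (m + 2) - 1) = -1 by
    field_simp; ring, rpow_neg_one, inv_inv] at key
  have hpow : (4 : ℝ≥0∞)⁻¹ ^ ((m : ℝ) + 1) = 4⁻¹ ^ (m + 1) := by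
    exact_mod_cast rpow_natCast _ (m + 1)
  rwa [hpow] at key

theorem ENNReal.tsum_succ_mul_two_pow_mul_inv_four_pow :
    ∑' m : ℕ, ((m : ℝ≥0∞) + 1) * 2 ^ (m + 1) * 4⁻¹ ^ (m + 1) = 2 := by
  have hhalf : (2 : ℝ≥0∞) * 4⁻¹ = ENNReal.ofReal (1 / 2) := by
    rw [ENNReal.ofReal_div_of_pos (by norm_num), show (4 : ℝ≥0∞) = 2 * 2 by norm_num,
      ENNReal.mul_inv (by simp) (by simp), ← mul_assoc, ENNReal.mul_inv_cancel (by simp) (by simp)]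
    simp
  have hreal : HasSum (fun n : ℕ => (n : ℝ) * (1 / 2 : ℝ) ^ n) 2 := by
    have h := hasSum_coe_mul_geometric_of_norm_lt_one (r := (1 / 2 : ℝ)) (by norm_num)
    norm_num at h ⊢
    exact h
  calc ∑' m : ℕ, ((m : ℝ≥0∞) + 1) * 2 ^ (m + 1) * 4⁻¹ ^ (m + 1)
      = ∑' n : ℕ, ENNReal.ofReal ((n : ℝ) * (1 / 2 : ℝ) ^ n) := by
        symm
        rw [tsum_eq_zero_add' ENNReal.summable]
        simp only [Nat.cast_zero, zero_mul, ENNReal.ofReal_zero, zero_add, mul_assoc, ← mul_pow,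
          hhalf, ← ENNReal.ofReal_pow (by norm_num : (0 : ℝ) ≤ 1 / 2)]
        refine tsum_congr fun m => ?_
        rw [ENNReal.ofReal_mul (by positivity), ENNReal.ofReal_natCast, Nat.cast_succ]
    _ = 2 := by
        rw [← ENNReal.ofReal_tsum_of_nonneg (fun n => by positivity) hreal.summable,
          hreal.tsum_eq, ENNReal.ofReal_ofNat]

theorem MeasureTheory.tsum_mul_measure_le_lintegral {X ι : Type*} [MeasurableSpace X]
    [Countable ι] {μ : Measure X} {s : ι → Set X} (hs : ∀ i, MeasurableSet (s i))
    (hd : Pairwise (Disjoint on s)) {w : ι → ℝ≥0∞} {g : X → ℝ≥0∞}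
    (hwg : ∀ i, ∀ x ∈ s i, w i ≤ g x) :
    ∑' i, w i * μ (s i) ≤ ∫⁻ x, g x ∂μ :=
  calc ∑' i, w i * μ (s i) = ∑' i, ∫⁻ _ in s i, w i ∂μ := by simp only [setLIntegral_const]
    _ ≤ ∑' i, ∫⁻ x in s i, g x ∂μ :=
        ENNReal.tsum_le_tsum fun i => setLIntegral_mono' (hs i) (hwg i)
    _ = ∫⁻ x in ⋃ i, s i, g x ∂μ := (lintegral_iUnion hs hd g).symm
    _ ≤ ∫⁻ x, g x ∂μ := setLIntegral_le_lintegral _ _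

section Eset

variable {X : Type*} {Ω : X → ℝ} {x : X} {m : ℕ}

theorem measurableSet_Eset [MeasurableSpace X] (hΩ : Measurable Ω) (m : ℕ) :
    MeasurableSet (Eset Ω m) := by
  unfold Eset
  split
  · exact measurableSet_le hΩ.abs measurable_const
  · exact (measurableSet_lt measurable_const hΩ.abs).inter
      (measurableSet_le hΩ.abs measurable_const)

theorem abs_le_of_mem_Eset_succ (hx : x ∈ Eset Ω (m + 1)) : |Ω x| ≤ 2 ^ (m + 1) := by
  unfold Eset at hx
  split_ifs at hx with hm
  · obtain rfl : m = 0 := by omega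
    simpa using hx
  · exact hx.2

theorem two_pow_lt_abs_of_mem_Eset (hx : x ∈ Eset Ω (m + 2)) : 2 ^ (m + 1) < |Ω x| := by
  unfold Eset at hx
  rw [if_neg (by omega)] at hx
  exact hx.1

theorem pairwise_disjoint_Eset_succ (Ω : X → ℝ) :
    Pairwise (Disjoint on fun m => Eset Ω (m + 1)) := by
  have hlt : ∀ i j : ℕ, i < j → Disjoint (Eset Ω (i + 1)) (Eset Ω (j + 1)) := by
    intro i j hij
    obtain ⟨k, rfl⟩ : ∃ k, j = k + 1 := ⟨j - 1, by omega⟩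
    refine Set.disjoint_left.mpr fun x hi hj => ?_
    have hle : (2 : ℝ) ^ (i + 1) ≤ 2 ^ (k + 1) := pow_le_pow_right₀ (by norm_num) (by omega)
    linarith [abs_le_of_mem_Eset_succ hi, two_pow_lt_abs_of_mem_Eset hj]
  intro i j hij
  rcases hij.lt_or_gt with h | h
  · exact hlt i j h
  · exact (hlt j i h).symm

theorem succ_mul_two_pow_le_of_mem_Eset (hx : x ∈ Eset Ω (m + 1)) :
    ((m : ℝ) + 1) * 2 ^ (m + 1) ≤ 2 + 4 / Real.log 2 * (|Ω x| * Real.log (2 + |Ω x|)) := by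
  have hlog2 : 0 < Real.log 2 := Real.log_pos (by norm_num)
  cases m with
  | zero =>
    have hf : 0 ≤ |Ω x| * Real.log (2 + |Ω x|) :=
      mul_nonneg (abs_nonneg _) (Real.log_nonneg (by linarith [abs_nonneg (Ω x)]))
    norm_num
    positivity
  | succ k =>
    have hΩ : 2 ^ (k + 1) < |Ω x| := two_pow_lt_abs_of_mem_Eset hx
    have hlog : (k + 1) * Real.log 2 ≤ Real.log (2 + |Ω x|) := by
      have h := Real.log_le_log (by positivity : (0 : ℝ) < 2 ^ (k + 1))
        (by linarith [abs_nonneg (Ω x)] : (2 : ℝ) ^ (k + 1) ≤ 2 + |Ω x|)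
      rwa [Real.log_pow, Nat.cast_succ] at h
    calc ((k + 1 : ℕ) + 1 : ℝ) * 2 ^ (k + 1 + 1) ≤ 2 * (k + 1) * 2 ^ (k + 1 + 1) := by
          gcongr; push_cast; linarith
      _ = 4 / Real.log 2 * (2 ^ (k + 1) * ((k + 1) * Real.log 2)) := by field_simp; ring
      _ ≤ 4 / Real.log 2 * (|Ω x| * Real.log (2 + |Ω x|)) := by gcongr
      _ ≤ _ := le_add_of_nonneg_left (by norm_num)

end Eset

theorem tsum_succ_mul_two_pow_mul_measure_Eset_le {X : Type*} [MeasurableSpace X]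
    (μ : Measure X) {Ω : X → ℝ} (hΩ : Measurable Ω) :
    ∑' m : ℕ, ((m : ℝ≥0∞) + 1) * 2 ^ (m + 1) * μ (Eset Ω (m + 1)) ≤
      2 * μ univ + ENNReal.ofReal (4 / Real.log 2) *
        ∫⁻ x, ENNReal.ofReal (|Ω x| * Real.log (2 + |Ω x|)) ∂μ := by
  have hweight : ∀ m : ℕ, ∀ x ∈ Eset Ω (m + 1), ((m : ℝ≥0∞) + 1) * 2 ^ (m + 1) ≤
      2 + ENNReal.ofReal (4 / Real.log 2) *
        ENNReal.ofReal (|Ω x| * Real.log (2 + |Ω x|)) := fun m x hx => by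
    have hc : 0 ≤ 4 / Real.log 2 := div_nonneg (by norm_num) (Real.log_nonneg (by norm_num))
    calc ((m : ℝ≥0∞) + 1) * 2 ^ (m + 1) = ENNReal.ofReal (((m : ℝ) + 1) * 2 ^ (m + 1)) := by
          rw [ENNReal.ofReal_mul (by positivity), ENNReal.ofReal_pow (by norm_num),
            ENNReal.ofReal_add (by positivity) (by norm_num), ENNReal.ofReal_natCast,
            ENNReal.ofReal_one, ENNReal.ofReal_ofNat]
      _ ≤ ENNReal.ofReal (2 + 4 / Real.log 2 * (|Ω x| * Real.log (2 + |Ω x|))) :=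
          ENNReal.ofReal_le_ofReal (succ_mul_two_pow_le_of_mem_Eset hx)
      _ ≤ _ := by
          grw [ENNReal.ofReal_add_le, ENNReal.ofReal_mul hc, ENNReal.ofReal_ofNat]
  calc _ ≤ ∫⁻ x, 2 + ENNReal.ofReal (4 / Real.log 2) *
          ENNReal.ofReal (|Ω x| * Real.log (2 + |Ω x|)) ∂μ :=
        tsum_mul_measure_le_lintegral (fun m => measurableSet_Eset hΩ _)
          (pairwise_disjoint_Eset_succ Ω) hweight
    _ = _ := by
        rw [lintegral_add_left measurable_const, lintegral_const,
          lintegral_const_mul' _ _ ofReal_ne_top]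

/-- The key extrapolation estimate: for a finite measure `μ` and `Ω` with
`∫ |Ω| log(2+|Ω|) dμ < ∞`, one has
`∑_{m≥1} m 2^m e_m^{m/(m+1)} ≤ C (∫ |Ω| log(2+|Ω|) dμ + 1)`, where `e_m = μ(E_m)`
and `C` depends only on `μ`. -/
theorem statement19 {X : Type*} [MeasurableSpace X] (μ : Measure X)
    [IsFiniteMeasure μ] :
    ∃ C : ℝ, 0 < C ∧ ∀ Ω : X → ℝ, Measurable Ω →
      (∫⁻ x, ENNReal.ofReal (|Ω x| * Real.log (2 + |Ω x|)) ∂μ) < ⊤ →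
      ∑' m : ℕ, (((m : ℝ≥0∞) + 1)) * 2 ^ (m + 1) *
          (μ (Eset Ω (m + 1))) ^ (((m:ℝ) + 1)/((m:ℝ) + 2)) ≤
        ENNReal.ofReal C *
          ((∫⁻ x, ENNReal.ofReal (|Ω x| * Real.log (2 + |Ω x|)) ∂μ) + 1) := by
  refine ⟨2 + 8 * μ.real univ + 16 / Real.log 2, by positivity, fun Ω hΩ _ => ?_⟩
  set I := ∫⁻ x, ENNReal.ofReal (|Ω x| * Real.log (2 + |Ω x|)) ∂μ
  set c := ENNReal.ofReal (4 / Real.log 2)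
  have hC :
      ENNReal.ofReal (2 + 8 * μ.real univ + 16 / Real.log 2) = 2 + 8 * μ univ + 4 * c := by
    rw [ENNReal.ofReal_add (by positivity) (by positivity),
      ENNReal.ofReal_add (by norm_num) (by positivity), ENNReal.ofReal_mul (by norm_num),
      ofReal_measureReal (measure_ne_top μ _),
      show 16 / Real.log 2 = 4 * (4 / Real.log 2) by ring,
      ENNReal.ofReal_mul (by norm_num)]
    norm_num
    rfl
  calc _ ≤ ∑' m : ℕ, ((m : ℝ≥0∞) + 1) * 2 ^ (m + 1) *
          (4⁻¹ ^ (m + 1) + 4 * μ (Eset Ω (m + 1))) :=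
        ENNReal.tsum_le_tsum fun m => by gcongr; exact rpow_le_inv_four_pow_add_four_mul m _
    _ = 2 + 4 * ∑' m : ℕ, ((m : ℝ≥0∞) + 1) * 2 ^ (m + 1) * μ (Eset Ω (m + 1)) := by
        simp only [mul_add, ENNReal.tsum_add, tsum_succ_mul_two_pow_mul_inv_four_pow,
          ← ENNReal.tsum_mul_left]
        congr 2 with m
        ring
    _ ≤ 2 + 4 * (2 * μ univ + c * I) := by
        gcongr; exact tsum_succ_mul_two_pow_mul_measure_Eset_le μ hΩ
    _ ≤ ENNReal.ofReal (2 + 8 * μ.real univ + 16 / Real.log 2) * (I + 1) := by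
        rw [hC]
        calc 2 + 4 * (2 * μ univ + c * I) = (2 + 8 * μ univ) + 4 * c * I := by ring
          _ ≤ (2 + 8 * μ univ + 4 * c) + (2 + 8 * μ univ + 4 * c) * I :=
              add_le_add le_self_add (by gcongr; exact le_add_self)
          _ = _ := by ring
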